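/- Let H be the mixed graph on four vertices a, b, c, d with arcs a→b and c→d, and edges between the tails a, c and between the heads b, d. Then for every natural number k, f_o(H,k) = k(k-1)²(k-2) = k⁴ - 4k³ + 5k² - 2k, and the arcs a→b and c→d form a pair of obstructing arcs in H. (Thus a mixed graph with a pair of obstructing arcs can nevertheless have the same counting function as the chromatic polynomial of a simple graph, namely the triangle with a pendant vertex.) -/

import Mathlib

/-- Adjacency in a mixed graph with arc relation `A` and edge relation `E`. -/
def MAdj {V : Type*} (A E : V → V → Prop) (u v : V) : Prop :=
  A u v ∨ A v u ∨ E u v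

/-- `u` and `w` are the ends of a 2-dipath. -/
def DipathEnds {V : Type*} (A : V → V → Prop) (u w : V) : Prop :=
  ∃ z, (A u z ∧ A z w) ∨ (A w z ∧ A z u)

/-- An oriented colouring of a mixed graph. -/
def MixedColoring {V : Type*} (A E : V → V → Prop) {k : ℕ} (c : V → Fin k) : Prop :=
  (∀ u v, MAdj A E u v → c u ≠ c v) ∧
  (∀ u v x y, A u v → A x y → c u = c y → c v ≠ c x)

/-- `f_o(G,k)`: the number of oriented `k`-colourings of the mixed graph `G = (V, A, E)`. -/
noncomputable def foM {V : Type*} (A E : V → V → Prop) (k : ℕ) : ℕ :=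
  Nat.card {c : V → Fin k // MixedColoring A E c}

/-- The arcs `a.1 → a.2` and `b.1 → b.2` form a pair of obstructing arcs. -/
def ObstructingPair {V : Type*} (A E : V → V → Prop) (a b : V × V) : Prop :=
  A a.1 a.2 ∧ A b.1 b.2 ∧
  a.1 ≠ a.2 ∧ a.1 ≠ b.1 ∧ a.1 ≠ b.2 ∧ a.2 ≠ b.1 ∧ a.2 ≠ b.2 ∧ b.1 ≠ b.2 ∧
  ¬ MAdj A E a.1 b.2 ∧ ¬ DipathEnds A a.1 b.2 ∧
  ¬ MAdj A E a.2 b.1 ∧ ¬ DipathEnds A a.2 b.1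

/-- Arcs of the mixed graph `H`: `a → b` and `c → d` (vertices `0 → 1` and `2 → 3`). -/
def hArc (a b : Fin 4) : Prop := (a = 0 ∧ b = 1) ∨ (a = 2 ∧ b = 3)

/-- Edges of the mixed graph `H`: between the tails `a, c` and between the heads `b, d`. -/
def hEdge (a b : Fin 4) : Prop :=
  (a = 0 ∧ b = 2) ∨ (a = 2 ∧ b = 0) ∨ (a = 1 ∧ b = 3) ∨ (a = 3 ∧ b = 1)

/-! In an oriented colouring `c` of `H`, the colours `c 1` and `c 2` must differ from `c 0`, and
`c 3` must avoid `c 1` and `c 2`, and also `c 0` when `c 1 = c 2` (the arcs `0 → 1`, `2 → 3` forbid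
`c 0 = c 3 ∧ c 1 = c 2`). Either way exactly two colours are forbidden for `c 3`, so there are
`k (k - 1)² (k - 2)` colourings. That the two arcs obstruct is a finite check. -/

open Finset

section Counting

variable {α : Type*} [Fintype α]

lemma natCard_subtype_fin_four (P : α → α → α → α → Prop) [∀ a b c d, Decidable (P a b c d)] :
    Nat.card {f : Fin 4 → α // P (f 0) (f 1) (f 2) (f 3)} =
      ∑ a, ∑ b, ∑ c, #{d | P a b c d} := by
  let e : (Fin 4 → α) ≃ α × α × α × α :=
    { toFun f := (f 0, f 1, f 2, f 3)
      invFun p := ![p.1, p.2.1, p.2.2.1, p.2.2.2]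
      left_inv f := by ext i; fin_cases i <;> rfl
      right_inv _ := rfl }
  simp only [Nat.card_eq_fintype_card, Fintype.card_subtype, card_filter]
  rw [← e.symm.sum_comp]
  simp only [Fintype.sum_prod_type]
  rfl

variable [DecidableEq α]

lemma card_filter_ne_and_ne {a b : α} (hab : a ≠ b) :
    #{z | z ≠ a ∧ z ≠ b} = Fintype.card α - 2 := by
  have : ({z | z ≠ a ∧ z ≠ b} : Finset α) = univ \ {a, b} := by
    ext z; simp
  rw [this, card_sdiff_of_subset (subset_univ _), card_pair hab, card_univ]

lemma card_filter_fourth_colour {w x y : α} (hwx : w ≠ x) (hwy : w ≠ y) :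
    #{z | z ≠ x ∧ z ≠ y ∧ ¬(w = z ∧ x = y)} = Fintype.card α - 2 := by
  rcases eq_or_ne x y with rfl | hxy
  · rw [← card_filter_ne_and_ne hwx.symm]
    congr 1; ext z; simp [eq_comm]
  · rw [← card_filter_ne_and_ne hxy]
    congr 1; ext z; simp [hxy]

lemma sum_card_filter_fourth_colour :
    ∑ a : α, ∑ b, ∑ c, #{d | (a ≠ b ∧ a ≠ c) ∧ d ≠ b ∧ d ≠ c ∧ ¬(a = d ∧ b = c)} =
      Fintype.card α * (Fintype.card α - 1) * (Fintype.card α - 1) * (Fintype.card α - 2) := by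
  calc _ = ∑ a : α, ∑ b ∈ {b | a ≠ b}, ∑ c ∈ {c | a ≠ c}, (Fintype.card α - 2) := by
          refine sum_congr rfl fun a _ => ?_
          rw [sum_filter]
          refine sum_congr rfl fun b _ => ?_
          split_ifs with hab
          · rw [sum_filter]
            refine sum_congr rfl fun c _ => ?_
            split_ifs with hac
            · simpa [hab, hac] using card_filter_fourth_colour hab hac
            · simp [hac]
          · simp [hab]
    _ = _ := by simp [filter_ne, mul_assoc]

end Counting

lemma mixedColoring_hArc_hEdge_iff {k : ℕ} (c : Fin 4 → Fin k) :
    MixedColoring hArc hEdge c ↔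
      (c 0 ≠ c 1 ∧ c 0 ≠ c 2) ∧ c 3 ≠ c 1 ∧ c 3 ≠ c 2 ∧ ¬(c 0 = c 3 ∧ c 1 = c 2) := by
  simp [MixedColoring, MAdj, hArc, hEdge, Fin.forall_fin_succ]
  tauto

lemma foM_hArc_hEdge (k : ℕ) : foM hArc hEdge k = k * (k - 1) * (k - 1) * (k - 2) := by
  rw [foM, Nat.card_congr (Equiv.subtypeEquivRight mixedColoring_hArc_hEdge_iff),
    natCard_subtype_fin_four fun a b c d => (a ≠ b ∧ a ≠ c) ∧ d ≠ b ∧ d ≠ c ∧ ¬(a = d ∧ b = c),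
    sum_card_filter_fourth_colour, Fintype.card_fin]

lemma intCast_foM_hArc_hEdge (k : ℕ) :
    (foM hArc hEdge k : ℤ) = k * (k - 1) ^ 2 * (k - 2) := by
  rw [foM_hArc_hEdge]
  rcases k with _ | _ | k
  · simp
  · simp
  · push_cast [Nat.add_sub_cancel]
    ring

lemma obstructingPair_hArc_hEdge : ObstructingPair hArc hEdge (0, 1) (2, 3) := by
  simp [ObstructingPair, MAdj, DipathEnds, hArc, hEdge]

theorem stmt_19 :
    (∀ k : ℕ,
      (foM hArc hEdge k : ℤ) = (k : ℤ) * ((k : ℤ) - 1) ^ 2 * ((k : ℤ) - 2) ∧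
      (foM hArc hEdge k : ℤ) =
        (k : ℤ) ^ 4 - 4 * (k : ℤ) ^ 3 + 5 * (k : ℤ) ^ 2 - 2 * (k : ℤ)) ∧
    ObstructingPair hArc hEdge (0, 1) (2, 3) := by
  refine ⟨fun k => ⟨intCast_foM_hArc_hEdge k, ?_⟩, obstructingPair_hArc_hEdge⟩
  rw [intCast_foM_hArc_hEdge]
  ring
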